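/- arXiv:1810.11591 — 3 statements merged into one kernel-verified Lean document; each statement's English description precedes it below -/
import Mathlib

section
/- (Bound for the term B.) In the pick-freeze setting with real output, let (Z_j, Z_j^ν), j = 1,…,N, be i.i.d. copies of (Z, Z^ν) and W₁,…,W_N i.i.d. copies of Z independent of them. For τ ∈ P_{N,2} set J(Z_j, W_τ) = (1/2)( h_{W_τ}(Z_j) + h_{W_τ}(Z_j^ν) ) and H(Z_i, Z_j, W_τ) = J(Z_i, W_τ) J(Z_j, W_τ), and define B_N = (1/(N²·C(N,2))) Σ_{i=1}^N Σ_{j=1}^N Σ_{τ ∈ P_{N,2}} ( H(Z_i, Z_j, W_τ) − E[ H(Z_i, Z_j, W_τ) ] ). Then for every s > 0, P( B_N > 6s ) ≤ 6 exp( − N s² / 8 ). -/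
open MeasureTheory ProbabilityTheory Real Set

/-- The indicator function of the "ball" (closed interval) with diameter the segment
joining `s` and `t` on the real line: `h_{s,t}(x) = 1{min(s,t) ≤ x ≤ max(s,t)}`. -/
noncomputable def hball (s t x : ℝ) : ℝ := if min s t ≤ x ∧ x ≤ max s t then 1 else 0

/-- `J(Z_j, W_τ) = (1/2)(h_{W_τ}(Z_j) + h_{W_τ}(Z_j^ν))` where `ξ j = ((Z_j, Z_j^ν), W_j)`
and `τ = (k₁, k₂)` indexes the pair `W_τ = (W_{k₁}, W_{k₂})`. -/
noncomputable def Jterm {Ω : Type*} {N : ℕ} (ξ : Fin N → Ω → (ℝ × ℝ) × ℝ)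
    (j : Fin N) (τ : Fin N × Fin N) (ω : Ω) : ℝ :=
  (1 / 2) * (hball ((ξ τ.1 ω).2) ((ξ τ.2 ω).2) ((ξ j ω).1.1) +
             hball ((ξ τ.1 ω).2) ((ξ τ.2 ω).2) ((ξ j ω).1.2))

/-- `H(Z_i, Z_j, W_τ) = J(Z_i, W_τ) J(Z_j, W_τ)`. -/
noncomputable def Hterm {Ω : Type*} {N : ℕ} (ξ : Fin N → Ω → (ℝ × ℝ) × ℝ)
    (i j : Fin N) (τ : Fin N × Fin N) (ω : Ω) : ℝ :=
  Jterm ξ i τ ω * Jterm ξ j τ ω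

/-- The centred term
`B_N = (1/(N²·C(N,2))) Σ_i Σ_j Σ_{τ ∈ P_{N,2}} (H(Z_i,Z_j,W_τ) - E[H(Z_i,Z_j,W_τ)])`. -/
noncomputable def Bterm {Ω : Type*} [MeasurableSpace Ω] (μ : Measure Ω) {N : ℕ}
    (ξ : Fin N → Ω → (ℝ × ℝ) × ℝ) (ω : Ω) : ℝ :=
  (((N : ℝ)) ^ 2 * (N.choose 2 : ℝ))⁻¹ *
    ∑ i : Fin N, ∑ j : Fin N,
      ∑ τ ∈ Finset.univ.filter (fun p : Fin N × Fin N => p.1 < p.2),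
        (Hterm ξ i j τ ω - ∫ ω', Hterm ξ i j τ ω' ∂μ)

/-!
Write `B_N = U(ξ) - E U(ξ)`, where `U` is the (uncentred) average of the `H`-terms, viewed as a
function of the `N` independent samples `ξ_k = ((Z_k, Z_k^ν), W_k)`. Replacing one sample `ξ_k`
changes only the terms with `i = k`, `j = k` or `k ∈ τ`, that is `4N·C(N,2)` of the
`N²·C(N,2)` terms, each by at most `1`; so `U` has bounded differences `4/N`. McDiarmid's
inequality (Hoeffding's lemma applied one coordinate at a time) makes `B_N` sub-Gaussian with
variance proxy `N·(4/N)² = 16/N`, and the Chernoff bound gives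
`P(B_N ≥ 6s) ≤ exp(-36 s² N / 32) ≤ exp(-N s² / 8)`.
-/

open scoped NNReal Finset

section McDiarmid

variable {E : Type*} [MeasurableSpace E]

def HasBoundedDifferences {ι : Type*} [DecidableEq ι] (g : (ι → E) → ℝ) (c : ℝ) : Prop :=
  ∀ x k e, |g (Function.update x k e) - g x| ≤ c

lemma measurable_fin_cons_uncurry {n : ℕ} :
    Measurable fun z : E × (Fin n → E) => (Fin.cons z.1 z.2 : Fin (n + 1) → E) := by
  refine measurable_pi_iff.2 fun i => ?_
  cases i using Fin.cases <;> simp only [Fin.cons_zero, Fin.cons_succ] <;> fun_prop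

lemma measurable_fin_cons_left {n : ℕ} (y : Fin n → E) :
    Measurable fun x : E => (Fin.cons x y : Fin (n + 1) → E) :=
  measurable_fin_cons_uncurry.comp measurable_prodMk_right

lemma integral_pi_fin_succ {n : ℕ} (P : Fin (n + 1) → Measure E) [∀ i, SigmaFinite (P i)]
    {f : (Fin (n + 1) → E) → ℝ} (hf : Integrable f (Measure.pi P)) :
    ∫ x, f x ∂Measure.pi P = ∫ y, ∫ x, f (Fin.cons x y) ∂P 0 ∂Measure.pi fun j => P j.succ := by
  have hmp := (measurePreserving_piFinSuccAbove P 0).symm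
  simp only [Fin.succAbove_zero] at hmp
  rw [← hmp.integral_comp' f, integral_prod_symm]
  · simp [Fin.consEquiv]
  · exact (hmp.integrable_comp_emb (MeasurableEquiv.measurableEmbedding _)).2 hf

lemma mgf_le_of_abs_sub_le (ν : Measure E) [IsProbabilityMeasure ν] {h : E → ℝ}
    (hh : Measurable h) {c : ℝ≥0} (hc : ∀ x y, |h x - h y| ≤ c) (t : ℝ) :
    mgf h ν t ≤ exp (t * ∫ x, h x ∂ν + c ^ 2 * t ^ 2 / 2) := by
  obtain ⟨x₀⟩ := nonempty_of_isProbabilityMeasure ν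
  have hsg := hasSubgaussianMGF_of_mem_Icc (μ := ν) (a := h x₀ - c) (b := h x₀ + c)
    hh.aemeasurable (ae_of_all _ fun x => by
      have := abs_le.1 (hc x x₀); constructor <;> linarith)
  have hpar : ((‖h x₀ + c - (h x₀ - c)‖₊ / 2) ^ 2 : ℝ≥0) = c ^ 2 := by
    ext; simp only [NNReal.coe_pow, NNReal.coe_div, coe_nnnorm, Real.norm_eq_abs]
    rw [abs_of_nonneg (by linarith [c.2])]; norm_num
  rw [hpar] at hsg
  calc mgf h ν t = mgf (fun x => h x - ∫ x, h x ∂ν) ν t * exp (t * ∫ x, h x ∂ν) := by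
        rw [← mgf_add_const]; simp
    _ ≤ exp (c ^ 2 * t ^ 2 / 2) * exp (t * ∫ x, h x ∂ν) := by
        gcongr; exact_mod_cast hsg.mgf_le t
    _ = _ := by rw [← exp_add]; ring_nf


lemma abs_integral_le_of_abs_le (ν : Measure E) [IsProbabilityMeasure ν] {h : E → ℝ} {C : ℝ}
    (hC : ∀ x, |h x| ≤ C) : |∫ x, h x ∂ν| ≤ C := by
  simpa using norm_integral_le_of_norm_le_const (μ := ν) (f := h)
    (ae_of_all _ fun x => (Real.norm_eq_abs _).le.trans (hC x))

section IntegralCons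

variable {n : ℕ} (ν : Measure E) [IsProbabilityMeasure ν] {g : (Fin (n + 1) → E) → ℝ}

lemma measurable_integral_cons (hg : Measurable g) :
    Measurable fun y => ∫ x, g (Fin.cons x y) ∂ν :=
  (hg.comp measurable_fin_cons_uncurry).stronglyMeasurable.integral_prod_left'.measurable

lemma HasBoundedDifferences.integral_cons (hg : Measurable g) {C : ℝ} (hC : ∀ x, |g x| ≤ C)
    {c : ℝ} (hbd : HasBoundedDifferences g c) :
    HasBoundedDifferences (fun y => ∫ x, g (Fin.cons x y) ∂ν) c := fun y k e => by
  have hint : ∀ y, Integrable (fun x => g (Fin.cons x y)) ν := fun y =>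
    .of_bound (hg.comp (measurable_fin_cons_left y)).aestronglyMeasurable C
      (ae_of_all _ fun x => hC _)
  rw [← integral_sub (hint _) (hint _)]
  exact abs_integral_le_of_abs_le ν fun x => by
    simpa [Fin.cons_update] using hbd (Fin.cons x y) k.succ e

end IntegralCons

/-- McDiarmid's inequality: integrate out the first coordinate, where Hoeffding's lemma applies
to each section, and induct on the remaining ones. -/
theorem mgf_pi_le_of_hasBoundedDifferences : ∀ {n : ℕ} (P : Fin n → Measure E)
    [∀ i, IsProbabilityMeasure (P i)] {g : (Fin n → E) → ℝ}, Measurable g → ∀ {C : ℝ},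
    (∀ x, |g x| ≤ C) → ∀ {c : ℝ≥0}, HasBoundedDifferences g c → ∀ t : ℝ,
    mgf g (Measure.pi P) t ≤ exp (t * ∫ x, g x ∂Measure.pi P + n * c ^ 2 * t ^ 2 / 2)
  | 0, P, _, g, _, _, _, _, _, t => by
    have hg : g = fun _ => g default := funext fun x => congrArg g (Subsingleton.elim _ _)
    rw [hg, mgf_const]
    simp
  | n + 1, P, _, g, hg, C, hC, c, hbd, t => by
    set P' : Fin n → Measure E := fun j => P j.succ
    set G : (Fin n → E) → ℝ := fun y => ∫ x, g (Fin.cons x y) ∂P 0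
    have hGm : Measurable G := measurable_integral_cons (P 0) hg
    have hGC : ∀ y, |G y| ≤ C := fun y => abs_integral_le_of_abs_le (P 0) fun x => hC _
    have hstep : ∀ y, mgf (fun x => g (Fin.cons x y)) (P 0) t
        ≤ exp (t * G y + c ^ 2 * t ^ 2 / 2) := fun y =>
      mgf_le_of_abs_sub_le (P 0) (hg.comp (measurable_fin_cons_left y))
        (fun x x' => by simpa [Fin.update_cons_zero] using hbd (Fin.cons x' y) 0 x) t
    have hIH := mgf_pi_le_of_hasBoundedDifferences P' hGm hGC
      (hbd.integral_cons (P 0) hg hC) t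
    have hexp : Integrable (fun x => exp (t * g x)) (Measure.pi P) :=
      integrable_exp_mul_of_mem_Icc hg.aemeasurable (ae_of_all _ fun x => abs_le.1 (hC x))
    have hGexp : Integrable (fun y => exp (t * G y)) (Measure.pi P') :=
      integrable_exp_mul_of_mem_Icc hGm.aemeasurable (ae_of_all _ fun y => abs_le.1 (hGC y))
    have hgint : Integrable g (Measure.pi P) :=
      .of_bound hg.aestronglyMeasurable C (ae_of_all _ hC)
    calc mgf g (Measure.pi P) t
        = ∫ y, mgf (fun x => g (Fin.cons x y)) (P 0) t ∂Measure.pi P' :=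
          integral_pi_fin_succ P hexp
      _ ≤ ∫ y, exp (c ^ 2 * t ^ 2 / 2) * exp (t * G y) ∂Measure.pi P' := by
          refine integral_mono_of_nonneg (ae_of_all _ fun y => mgf_nonneg)
            (hGexp.const_mul _) (ae_of_all _ fun y => ?_)
          simpa only [← exp_add, add_comm] using hstep y
      _ = exp (c ^ 2 * t ^ 2 / 2) * mgf G (Measure.pi P') t := integral_const_mul _ _
      _ ≤ exp (c ^ 2 * t ^ 2 / 2) * exp (t * ∫ y, G y ∂Measure.pi P' + n * c ^ 2 * t ^ 2 / 2) := by
          gcongr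
      _ = exp (t * ∫ x, g x ∂Measure.pi P + (n + 1 : ℕ) * c ^ 2 * t ^ 2 / 2) := by
          rw [integral_pi_fin_succ P hgint, ← exp_add]
          simp only [G, P']
          push_cast
          ring_nf

theorem hasSubgaussianMGF_pi_of_hasBoundedDifferences {n : ℕ} (P : Fin n → Measure E)
    [∀ i, IsProbabilityMeasure (P i)] {g : (Fin n → E) → ℝ} (hg : Measurable g) {C : ℝ}
    (hC : ∀ x, |g x| ≤ C) {c : ℝ≥0} (hbd : HasBoundedDifferences g c) :
    HasSubgaussianMGF (fun x => g x - ∫ x, g x ∂Measure.pi P) (n * c ^ 2) (Measure.pi P) where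
  integrable_exp_mul t := integrable_exp_mul_of_mem_Icc (a := -C - ∫ x, g x ∂Measure.pi P)
    (b := C - ∫ x, g x ∂Measure.pi P) (hg.sub_const _).aemeasurable (ae_of_all _ fun x => by
      have := abs_le.1 (hC x); constructor <;> linarith [this.1, this.2])
  mgf_le t := by
    simp_rw [sub_eq_add_neg]
    rw [mgf_add_const]
    calc _ ≤ exp (t * ∫ x, g x ∂Measure.pi P + n * c ^ 2 * t ^ 2 / 2) *
          exp (t * -∫ x, g x ∂Measure.pi P) := by
          gcongr; exact mgf_pi_le_of_hasBoundedDifferences P hg hC hbd t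
      _ = _ := by rw [← exp_add]; push_cast; ring_nf

end McDiarmid

lemma abs_sum_sum_sum_le {ι κ ρ : Type*} (s : Finset ι) (t : Finset κ) (u : Finset ρ)
    {f g : ι → κ → ρ → ℝ} (h : ∀ i j τ, |f i j τ| ≤ g i j τ) :
    |∑ i ∈ s, ∑ j ∈ t, ∑ τ ∈ u, f i j τ| ≤ ∑ i ∈ s, ∑ j ∈ t, ∑ τ ∈ u, g i j τ :=
  (Finset.abs_sum_le_sum_abs _ _).trans <| Finset.sum_le_sum fun i _ =>
    (Finset.abs_sum_le_sum_abs _ _).trans <| Finset.sum_le_sum fun j _ =>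
      (Finset.abs_sum_le_sum_abs _ _).trans <| Finset.sum_le_sum fun τ _ => h i j τ

section Hterm

variable {Ω : Type*} {N : ℕ}

lemma hball_mem_Icc (s t x : ℝ) : hball s t x ∈ Icc (0 : ℝ) 1 := by
  unfold hball; split_ifs <;> simp

lemma Hterm_mem_Icc (ξ : Fin N → Ω → (ℝ × ℝ) × ℝ) (i j : Fin N) (τ : Fin N × Fin N) (ω : Ω) :
    Hterm ξ i j τ ω ∈ Icc (0 : ℝ) 1 := by
  have hJ : ∀ j, Jterm ξ j τ ω ∈ Icc (0 : ℝ) 1 := fun j => by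
    have h₁ := hball_mem_Icc ((ξ τ.1 ω).2) ((ξ τ.2 ω).2) ((ξ j ω).1.1)
    have h₂ := hball_mem_Icc ((ξ τ.1 ω).2) ((ξ τ.2 ω).2) ((ξ j ω).1.2)
    simp only [Jterm, mem_Icc] at h₁ h₂ ⊢
    constructor <;> linarith
  exact ⟨mul_nonneg (hJ i).1 (hJ j).1, mul_le_one₀ (hJ i).2 (hJ j).1 (hJ j).2⟩

lemma abs_Hterm_le_one (ξ : Fin N → Ω → (ℝ × ℝ) × ℝ) (i j : Fin N) (τ : Fin N × Fin N)
    (ω : Ω) : |Hterm ξ i j τ ω| ≤ 1 :=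
  abs_le.2 ⟨by linarith [(Hterm_mem_Icc ξ i j τ ω).1], (Hterm_mem_Icc ξ i j τ ω).2⟩

variable [MeasurableSpace Ω]

lemma Measurable.hball {f g h : Ω → ℝ} (hf : Measurable f) (hg : Measurable g)
    (hh : Measurable h) : Measurable fun ω => hball (f ω) (g ω) (h ω) :=
  Measurable.ite ((measurableSet_le (hf.min hg) hh).inter (measurableSet_le hh (hf.max hg)))
    measurable_const measurable_const

lemma measurable_Hterm {ξ : Fin N → Ω → (ℝ × ℝ) × ℝ} (hξ : ∀ k, Measurable (ξ k))
    (i j : Fin N) (τ : Fin N × Fin N) : Measurable (Hterm ξ i j τ) := by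
  have hJ : ∀ j, Measurable (Jterm ξ j τ) := fun j =>
    (((hξ τ.1).snd.hball (hξ τ.2).snd (hξ j).fst.fst).add
      ((hξ τ.1).snd.hball (hξ τ.2).snd (hξ j).fst.snd)).const_mul _
  exact (hJ i).mul (hJ j)

lemma integrable_Hterm (μ : Measure Ω) [IsFiniteMeasure μ] {ξ : Fin N → Ω → (ℝ × ℝ) × ℝ}
    (hξ : ∀ k, Measurable (ξ k)) (i j : Fin N) (τ : Fin N × Fin N) :
    Integrable (Hterm ξ i j τ) μ :=
  .of_bound (measurable_Hterm hξ i j τ).aestronglyMeasurable 1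
    (ae_of_all _ fun ω => abs_Hterm_le_one ξ i j τ ω)

end Hterm

section Ustat

variable {N : ℕ}

/-- `Bterm` before centring, as a function of the sample `x k = ((Z_k, Z_k^ν), W_k)`:
`Hterm Function.eval` is the `H`-term read off `x`. -/
noncomputable def Ustat (x : Fin N → (ℝ × ℝ) × ℝ) : ℝ :=
  ((N : ℝ) ^ 2 * (N.choose 2 : ℝ))⁻¹ *
    ∑ i : Fin N, ∑ j : Fin N, ∑ τ ∈ Finset.univ.filter (fun p : Fin N × Fin N => p.1 < p.2),
      Hterm Function.eval i j τ x

lemma measurable_Ustat : Measurable (Ustat (N := N)) :=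
  (Finset.measurable_sum _ fun i _ => Finset.measurable_sum _ fun j _ =>
    Finset.measurable_sum _ fun τ _ =>
      measurable_Hterm (fun k => measurable_pi_apply k) i j τ).const_mul _

lemma Bterm_eq_Ustat_sub_integral {Ω : Type*} [MeasurableSpace Ω] (μ : Measure Ω)
    [IsFiniteMeasure μ] {ξ : Fin N → Ω → (ℝ × ℝ) × ℝ} (hξ : ∀ k, Measurable (ξ k)) (ω : Ω) :
    Bterm μ ξ ω = Ustat (fun k => ξ k ω) - ∫ ω', Ustat (fun k => ξ k ω') ∂μ := by
  have hint := integrable_Hterm μ hξ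
  have hcoord : ∀ ω i j τ, Hterm Function.eval i j τ (fun k => ξ k ω) = Hterm ξ i j τ ω :=
    fun _ _ _ _ => rfl
  have hsum : ∫ ω', ∑ i : Fin N, ∑ j : Fin N,
      ∑ τ ∈ Finset.univ.filter (fun p : Fin N × Fin N => p.1 < p.2), Hterm ξ i j τ ω' ∂μ
      = ∑ i : Fin N, ∑ j : Fin N,
      ∑ τ ∈ Finset.univ.filter (fun p : Fin N × Fin N => p.1 < p.2), ∫ ω', Hterm ξ i j τ ω' ∂μ := by
    rw [integral_finsetSum _ fun i _ => integrable_finsetSum _ fun j _ =>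
      integrable_finsetSum _ fun τ _ => hint i j τ]
    refine Finset.sum_congr rfl fun i _ => ?_
    rw [integral_finsetSum _ fun j _ => integrable_finsetSum _ fun τ _ => hint i j τ]
    exact Finset.sum_congr rfl fun j _ => integral_finsetSum _ fun τ _ => hint i j τ
  simp only [Bterm, Ustat, hcoord]
  rw [integral_const_mul, ← mul_sub, hsum]
  simp only [Finset.sum_sub_distrib]

lemma abs_Ustat_le_one (x : Fin N → (ℝ × ℝ) × ℝ) : |Ustat x| ≤ 1 := by
  have hD : (0 : ℝ) ≤ (N : ℝ) ^ 2 * (N.choose 2 : ℝ) := by positivity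
  have hsum := abs_sum_sum_sum_le Finset.univ Finset.univ
    (Finset.univ.filter fun p : Fin N × Fin N => p.1 < p.2) (g := fun _ _ _ => (1 : ℝ))
    fun i j τ => abs_Hterm_le_one Function.eval i j τ x
  simp only [Finset.sum_const, Finset.card_univ, Fintype.card_fin, nsmul_eq_mul, mul_one,
    Fintype.card_product_filter_lt] at hsum
  rw [Ustat, abs_mul, abs_of_nonneg (inv_nonneg.2 hD)]
  calc _ ≤ ((N : ℝ) ^ 2 * (N.choose 2 : ℝ))⁻¹ * ((N : ℝ) ^ 2 * (N.choose 2 : ℝ)) := by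
        rw [sq, mul_assoc]; gcongr
    _ ≤ 1 := inv_mul_le_one_of_le₀ le_rfl hD

lemma Hterm_update_of_ne (x : Fin N → (ℝ × ℝ) × ℝ) {k : Fin N} (e : (ℝ × ℝ) × ℝ)
    {i j : Fin N} {τ : Fin N × Fin N} (hi : i ≠ k) (hj : j ≠ k) (h₁ : τ.1 ≠ k) (h₂ : τ.2 ≠ k) :
    Hterm Function.eval i j τ (Function.update x k e) = Hterm Function.eval i j τ x := by
  simp only [Hterm, Jterm, Function.update_of_ne, hi, hj, h₁, h₂, Ne, not_false_eq_true]

lemma abs_Hterm_update_sub_le (x : Fin N → (ℝ × ℝ) × ℝ) (k : Fin N) (e : (ℝ × ℝ) × ℝ)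
    (i j : Fin N) (τ : Fin N × Fin N) :
    |Hterm Function.eval i j τ (Function.update x k e) - Hterm Function.eval i j τ x| ≤
      (if i = k then 1 else 0) + (if j = k then 1 else 0) + (if τ.1 = k then 1 else 0) +
        (if τ.2 = k then 1 else 0) := by
  by_cases h : i = k ∨ j = k ∨ τ.1 = k ∨ τ.2 = k
  · have h₁ := Hterm_mem_Icc Function.eval i j τ (Function.update x k e)
    have h₂ := Hterm_mem_Icc Function.eval i j τ x
    calc _ ≤ (1 : ℝ) := abs_sub_le_of_nonneg_of_le h₁.1 h₁.2 h₂.1 h₂.2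
      _ ≤ _ := by rcases h with h | h | h | h <;> simp only [h, if_true] <;> split_ifs <;> norm_num
  · push Not at h
    rw [Hterm_update_of_ne x e h.1 h.2.1 h.2.2.1 h.2.2.2, sub_self, abs_zero]
    split_ifs <;> norm_num

lemma card_pairs_with_endpoint (k : Fin N) :
    #{τ : Fin N × Fin N | τ.1 < τ.2 ∧ τ.1 = k} + #{τ : Fin N × Fin N | τ.1 < τ.2 ∧ τ.2 = k} =
      N - 1 := by
  have h₁ : ({τ : Fin N × Fin N | τ.1 < τ.2 ∧ τ.1 = k} : Finset _) =
      (Finset.Ioi k).map (.sectR k _) := by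
    ext ⟨a, b⟩; simp only [Finset.mem_filter, Finset.mem_univ, true_and, Finset.mem_map,
      Finset.mem_Ioi, Function.Embedding.sectR_apply, Prod.mk.injEq]
    constructor
    · rintro ⟨hab, rfl⟩; exact ⟨b, hab, rfl, rfl⟩
    · rintro ⟨b, hb, rfl, rfl⟩; exact ⟨hb, rfl⟩
  have h₂ : ({τ : Fin N × Fin N | τ.1 < τ.2 ∧ τ.2 = k} : Finset _) =
      (Finset.Iio k).map (.sectL _ k) := by
    ext ⟨a, b⟩; simp only [Finset.mem_filter, Finset.mem_univ, true_and, Finset.mem_map,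
      Finset.mem_Iio, Function.Embedding.sectL_apply, Prod.mk.injEq]
    constructor
    · rintro ⟨hab, rfl⟩; exact ⟨a, hab, rfl, rfl⟩
    · rintro ⟨a, ha, rfl, rfl⟩; exact ⟨ha, rfl⟩
  rw [h₁, h₂, Finset.card_map, Finset.card_map, Fin.card_Ioi, Fin.card_Iio]
  omega

lemma hasBoundedDifferences_Ustat : HasBoundedDifferences (Ustat (N := N)) (4 / N) := by
  intro x k e
  set P := Finset.univ.filter fun p : Fin N × Fin N => p.1 < p.2
  have hP : (#P : ℝ) = N * (N - 1) / 2 := by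
    rw [Fintype.card_product_filter_lt, Fintype.card_fin, Nat.cast_choose_two]
  have hcount : ∑ i : Fin N, ∑ j : Fin N, ∑ τ ∈ P, ((if i = k then (1 : ℝ) else 0) +
      (if j = k then 1 else 0) + (if τ.1 = k then 1 else 0) + (if τ.2 = k then 1 else 0)) =
      4 * N * #P := by
    have hk : (#{τ : Fin N × Fin N | τ.1 < τ.2 ∧ τ.1 = k} : ℝ) +
        #{τ : Fin N × Fin N | τ.1 < τ.2 ∧ τ.2 = k} = N - 1 := by
      rw [← Nat.cast_add, card_pairs_with_endpoint, Nat.cast_pred k.pos]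
    simp only [Finset.sum_add_distrib, Finset.sum_const, Finset.sum_boole, Finset.card_univ,
      Fintype.card_fin, nsmul_eq_mul, P, Finset.filter_filter, ← Finset.mul_sum,
      Finset.filter_eq', Finset.mem_univ, if_true, Finset.card_singleton, Nat.cast_one]
    linear_combination (N : ℝ) ^ 2 * hk - 2 * N * hP
  have hPc : (#P : ℝ) = N.choose 2 := by rw [Fintype.card_product_filter_lt, Fintype.card_fin]
  have hD : (0 : ℝ) ≤ (N : ℝ) ^ 2 * (N.choose 2 : ℝ) := by positivity
  have hdiff : Ustat (Function.update x k e) - Ustat x =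
      ((N : ℝ) ^ 2 * (N.choose 2 : ℝ))⁻¹ * ∑ i : Fin N, ∑ j : Fin N, ∑ τ ∈ P,
        (Hterm Function.eval i j τ (Function.update x k e) - Hterm Function.eval i j τ x) := by
    simp only [Ustat, ← mul_sub, ← Finset.sum_sub_distrib, P]
  rw [hdiff, abs_mul, abs_of_nonneg (inv_nonneg.2 hD)]
  calc _ ≤ ((N : ℝ) ^ 2 * (N.choose 2 : ℝ))⁻¹ * (4 * N * #P) := by
        rw [← hcount]; gcongr; exact abs_sum_sum_sum_le _ _ _ (abs_Hterm_update_sub_le x k e)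
    _ ≤ 4 / N := by
        rw [hPc]
        rcases eq_or_ne (N.choose 2 : ℝ) 0 with hc | hc
        · simp only [hc, mul_zero, inv_zero]; positivity
        · exact le_of_eq (by field_simp)

end Ustat

theorem hasSubgaussianMGF_Bterm {Ω : Type*} [MeasurableSpace Ω] (μ : Measure Ω)
    [IsProbabilityMeasure μ] {N : ℕ} {ξ : Fin N → Ω → (ℝ × ℝ) × ℝ} (hξm : ∀ j, Measurable (ξ j))
    (hξindep : iIndepFun ξ μ) : HasSubgaussianMGF (Bterm μ ξ) (16 / N) μ := by
  have hY : Measurable fun ω k => ξ k ω := measurable_pi_iff.2 hξm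
  have hlaw : μ.map (fun ω k => ξ k ω) = Measure.pi fun k => μ.map (ξ k) :=
    hξindep.map_fun_eq_pi_map fun k => (hξm k).aemeasurable
  have : ∀ k, IsProbabilityMeasure (μ.map (ξ k)) := fun k =>
    Measure.isProbabilityMeasure_map (hξm k).aemeasurable
  have hbd : HasBoundedDifferences (Ustat (N := N)) ((4 / N : ℝ≥0) : ℝ) := by
    simpa using hasBoundedDifferences_Ustat
  have hpar : (N * (4 / N : ℝ≥0) ^ 2 : ℝ≥0) = 16 / N := by
    rcases eq_or_ne N 0 with rfl | hN
    · simp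
    · field_simp; norm_num
  have h := hasSubgaussianMGF_pi_of_hasBoundedDifferences (fun k => μ.map (ξ k)) measurable_Ustat
    abs_Ustat_le_one hbd
  rw [← hlaw, hpar] at h
  convert h.of_map hY.aemeasurable using 1
  funext ω
  rw [Bterm_eq_Ustat_sub_integral μ hξm, Function.comp_apply,
    integral_map hY.aemeasurable measurable_Ustat.aestronglyMeasurable]

theorem stmt7_general {Ω : Type*} [MeasurableSpace Ω] (μ : Measure Ω) [IsProbabilityMeasure μ]
    {N : ℕ} (ξ : Fin N → Ω → (ℝ × ℝ) × ℝ) (hξm : ∀ j, Measurable (ξ j))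
    (hξindep : iIndepFun ξ μ) :
    ∀ s : ℝ, 0 < s →
      (μ {ω | Bterm μ ξ ω > 6 * s}).toReal ≤ 6 * Real.exp (-((N : ℝ) * s ^ 2) / 8) := by
  intro s hs
  have hexponent : -(6 * s) ^ 2 / (2 * ((16 / N : ℝ≥0) : ℝ)) = -(9 / 8) * (N * s ^ 2) := by
    rcases eq_or_ne (N : ℝ) 0 with hN | hN
    · simp [hN]
    · push_cast; field_simp; ring
  calc (μ {ω | Bterm μ ξ ω > 6 * s}).toReal ≤ μ.real {ω | 6 * s ≤ Bterm μ ξ ω} :=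
        measureReal_mono fun _ hω => le_of_lt (α := ℝ) hω
    _ ≤ exp (-(6 * s) ^ 2 / (2 * ((16 / N : ℝ≥0) : ℝ))) :=
        (hasSubgaussianMGF_Bterm μ hξm hξindep).measure_ge_le (by positivity)
    _ ≤ exp (-((N : ℝ) * s ^ 2) / 8) := by
        rw [hexponent]; gcongr; nlinarith [mul_nonneg (Nat.cast_nonneg N) (sq_nonneg s)]
    _ ≤ 6 * exp (-((N : ℝ) * s ^ 2) / 8) := by linarith [exp_pos (-((N : ℝ) * s ^ 2) / 8)]

/-- **Bound for the term B.** In the pick-freeze setting with real output,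
with `(Z_j, Z_j^ν)`, `j = 1,…,N`, i.i.d. copies of `(Z, Z^ν)` and `W₁,…,W_N` i.i.d. copies
of `Z` independent of them, for every `s > 0`, `P(B_N > 6s) ≤ 6 exp(-N s² / 8)`. -/
theorem stmt7 {Ω : Type*} [MeasurableSpace Ω] (μ : Measure Ω) [IsProbabilityMeasure μ]
    {d : ℕ} (X X' : Ω → Fin d → ℝ)
    (hX : Measurable X) (hX' : Measurable X')
    (hcoord : iIndepFun (fun i ω => X ω i) μ)
    (hXX' : IndepFun X X' μ) (hid : IdentDistrib X' X μ μ)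
    (ν : Finset (Fin d)) (f : (Fin d → ℝ) → ℝ) (hf : Measurable f)
    (Z Zν : Ω → ℝ)
    (hZ : Z = fun ω => f (X ω))
    (hZν : Zν = fun ω => f (fun i => if i ∈ ν then X ω i else X' ω i))
    {N : ℕ} (ξ : Fin N → Ω → (ℝ × ℝ) × ℝ) (hξm : ∀ j, Measurable (ξ j))
    (hξindep : iIndepFun ξ μ)
    (hξlaw : ∀ j, μ.map (ξ j) = (μ.map (fun ω => (Z ω, Zν ω))).prod (μ.map Z)) :
    ∀ s : ℝ, 0 < s →
      (μ {ω | Bterm μ ξ ω > 6 * s}).toReal ≤ 6 * Real.exp (-((N : ℝ) * s ^ 2) / 8) :=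
  stmt7_general μ ξ hξm hξindep
end

section
/- Let α > 0, let X₁ be Bernoulli(p) with 0 ≤ p ≤ 1 and X₂ a real random variable independent of X₁ with continuous cumulative distribution function F, and set Z = αX₁ + X₂. With Z₁, Z₂ independent copies of Z and h_{s,t}(x) = 1{min(s,t) ≤ x ≤ max(s,t)}, the ball sensitivity numerator with respect to X₁ satisfies S¹₂ := E_{Z₁,Z₂}[ Var( E[ h_{Z₁,Z₂}(Z) | X₁ ] ) ] = 2p(1−p) · Var( F(Z) − F(Z−α) ). -/
open MeasureTheory ProbabilityTheory Real Set

/-!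
Since `X₁` and `X₂` are independent, `E[h_{s,t}(Z) | X₁] = K(X₁)` with
`K(x) = P(min(s,t) ≤ αx + X₂ ≤ max(s,t)) = F(max(s,t) - αx) - F(min(s,t) - αx)`,
the last step using that the continuous CDF `F` has no atoms. As `X₁` is Bernoulli,
`Var K(X₁) = p(1-p)(K(1) - K(0))² = p(1-p)(G(s) - G(t))²` where `G(z) = F(z) - F(z - α)`.
Finally `E(G(Z₁) - G(Z₂))² = 2 Var G(Z)` for independent copies `Z₁, Z₂` of `Z`.
-/

lemma IndepFun.condExp_comp_prod_ae_eq {Ω β γ : Type*} [MeasurableSpace Ω] {μ : Measure Ω}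
    [IsFiniteMeasure μ] [MeasurableSpace β] [MeasurableSpace γ] [StandardBorelSpace γ]
    [Nonempty γ] {X : Ω → β} {Y : Ω → γ} (hX : Measurable X) (hY : Measurable Y)
    (hXY : IndepFun X Y μ) {f : β × γ → ℝ} (hf : StronglyMeasurable f)
    (hf_int : Integrable (fun ω => f (X ω, Y ω)) μ) :
    μ[fun ω => f (X ω, Y ω) | MeasurableSpace.comap X inferInstance]
      =ᵐ[μ] fun ω => ∫ ω', f (X ω, Y ω') ∂μ := by
  have hκ : condDistrib Y X μ =ᵐ[μ.map X] Kernel.const β (μ.map Y) := by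
    refine condDistrib_ae_eq_of_measure_eq_compProd X hY.aemeasurable ?_
    rw [Measure.compProd_const]
    exact (indepFun_iff_map_prod_eq_prod_map_map hX.aemeasurable hY.aemeasurable).mp hXY
  filter_upwards [condExp_prod_ae_eq_integral_condDistrib hX hY.aemeasurable hf hf_int,
    ae_of_ae_map hX.aemeasurable hκ] with ω hce hcond
  rw [hce, hcond, Kernel.const_apply,
    integral_map (f := fun y => f (X ω, y)) hY.aemeasurable
      (hf.comp_measurable measurable_prodMk_left).aestronglyMeasurable]

lemma integral_sub_sq_prod_self {Ω : Type*} [MeasurableSpace Ω] {ν : Measure Ω}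
    [IsProbabilityMeasure ν] {f : Ω → ℝ} (hf : MemLp f 2 ν) :
    ∫ q, (f q.1 - f q.2) ^ 2 ∂(ν.prod ν) = 2 * Var[f; ν] := by
  have hint := hf.integrable one_le_two
  have hmean : ∫ q, (f q.1 - f q.2) ∂(ν.prod ν) = 0 := by
    rw [integral_sub (hint.comp_fst ν) (hint.comp_snd ν), integral_fun_fst, integral_fun_snd]
    simp
  have hsplit := variance_add_prod hf hf.neg
  simp only [Pi.neg_apply, ← sub_eq_add_neg, variance_neg] at hsplit
  rw [← variance_of_integral_eq_zero (by fun_prop) hmean, hsplit]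
  ring

lemma bernoulliMeasure_eq_ofReal_smul {X : Type*} [MeasurableSpace X] (x y : X) {p : ℝ}
    (hp0 : 0 ≤ p) (hp1 : p ≤ 1) :
    bernoulliMeasure x y ⟨p, hp0, hp1⟩
      = ENNReal.ofReal p • Measure.dirac x + ENNReal.ofReal (1 - p) • Measure.dirac y := by
  rw [bernoulliMeasure_def, ← Measure.coe_nnreal_smul, ← Measure.coe_nnreal_smul,
    ENNReal.ofReal_eq_coe_nnreal hp0, ENNReal.ofReal_eq_coe_nnreal (sub_nonneg.2 hp1)]
  rfl

lemma variance_bernoulliMeasure {X : Type*} [MeasurableSpace X] [MeasurableSingletonClass X]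
    (x y : X) (p : unitInterval) (f : X → ℝ) :
    Var[f; bernoulliMeasure x y p] = p * (1 - p) * (f x - f y) ^ 2 := by
  rw [variance_eq_integral (integrable_bernoulliMeasure x y p f).aemeasurable,
    integral_bernoulliMeasure, integral_bernoulliMeasure]
  simp only [smul_eq_mul]
  ring

lemma cdf_map_eq_toReal {Ω : Type*} [MeasurableSpace Ω] {μ : Measure Ω} [IsProbabilityMeasure μ]
    {X : Ω → ℝ} (hX : Measurable X) (t : ℝ) :
    cdf (μ.map X) t = (μ {ω | X ω ≤ t}).toReal := by
  have := Measure.isProbabilityMeasure_map (μ := μ) hX.aemeasurable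
  rw [cdf_eq_real, map_measureReal_apply hX measurableSet_Iic]
  rfl

lemma measureReal_Icc_eq_cdf_sub {ν : Measure ℝ} [IsProbabilityMeasure ν]
    (hν : Continuous (cdf ν)) {a b : ℝ} (hab : a ≤ b) :
    ν.real (Icc a b) = cdf ν b - cdf ν a := by
  nth_rw 1 [measureReal_def, ← measure_cdf ν]
  rw [StieltjesFunction.measure_Icc, hν.continuousAt.continuousWithinAt.leftLim_eq,
    ENNReal.toReal_ofReal (sub_nonneg.2 (monotone_cdf ν hab))]

lemma measurable_hball (s t : ℝ) : Measurable (hball s t) :=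
  Measurable.ite measurableSet_Icc measurable_const measurable_const

lemma abs_hball_le_one (s t x : ℝ) : |hball s t x| ≤ 1 := by
  unfold hball; split <;> norm_num

lemma integral_hball_const_add {ν : Measure ℝ} [IsProbabilityMeasure ν]
    (hν : Continuous (cdf ν)) (s t c : ℝ) :
    ∫ y, hball s t (c + y) ∂ν = cdf ν (max s t - c) - cdf ν (min s t - c) := by
  have hind : (fun y => hball s t (c + y))
      = (Icc (min s t - c) (max s t - c)).indicator 1 := by
    ext y
    simp only [hball, indicator, mem_Icc, Pi.one_apply]
    refine if_congr ⟨fun h => ?_, fun h => ?_⟩ rfl rfl <;> obtain ⟨h1, h2⟩ := h <;>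
      constructor <;> linarith
  rw [hind, integral_indicator_one measurableSet_Icc,
    measureReal_Icc_eq_cdf_sub hν (by linarith [min_le_max (a := s) (b := t)])]

lemma variance_condExp_hball {Ω : Type*} [MeasurableSpace Ω] {μ : Measure Ω}
    [IsProbabilityMeasure μ] {α : ℝ} {p : unitInterval} {X₁ X₂ : Ω → ℝ} (hX₁ : Measurable X₁)
    (hX₂ : Measurable X₂) (hBer : μ.map X₁ = bernoulliMeasure 1 0 p) (hindep : IndepFun X₁ X₂ μ)
    (hF : Continuous (cdf (μ.map X₂))) (s t : ℝ) :
    Var[μ[fun ω => hball s t (α * X₁ ω + X₂ ω) | MeasurableSpace.comap X₁ inferInstance]; μ]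
      = p * (1 - p) * ((cdf (μ.map X₂) s - cdf (μ.map X₂) (s - α))
          - (cdf (μ.map X₂) t - cdf (μ.map X₂) (t - α))) ^ 2 := by
  have := Measure.isProbabilityMeasure_map (μ := μ) hX₂.aemeasurable
  set F := cdf (μ.map X₂)
  set K : ℝ → ℝ := fun x => ∫ ω, hball s t (α * x + X₂ ω) ∂μ
  have hce : μ[fun ω => hball s t (α * X₁ ω + X₂ ω) | MeasurableSpace.comap X₁ inferInstance]
      =ᵐ[μ] K ∘ X₁ :=
    IndepFun.condExp_comp_prod_ae_eq (f := fun q => hball s t (α * q.1 + q.2)) hX₁ hX₂ hindep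
      ((measurable_hball s t).comp (by fun_prop)).stronglyMeasurable
      (.of_bound ((measurable_hball s t).comp (by fun_prop)).aestronglyMeasurable 1
        (ae_of_all _ fun ω => abs_hball_le_one s t _))
  have hK : ∀ x, K x = F (max s t - α * x) - F (min s t - α * x) := fun x => by
    rw [← integral_hball_const_add hF, integral_map (f := fun y => hball s t (α * x + y))
      hX₂.aemeasurable ((measurable_hball s t).comp (by fun_prop)).aestronglyMeasurable]
  rw [variance_congr hce, ← variance_map (hBer ▸ (integrable_bernoulliMeasure 1 0 p K).aemeasurable)
    hX₁.aemeasurable, hBer, variance_bernoulliMeasure, hK, hK]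
  rcases le_total s t with h | h
  · simp only [min_eq_left h, max_eq_right h, mul_one, mul_zero, sub_zero]; ring
  · simp only [min_eq_right h, max_eq_left h, mul_one, mul_zero, sub_zero]; ring

theorem stmt10_general {Ω : Type*} [MeasurableSpace Ω] (μ : Measure Ω) [IsProbabilityMeasure μ]
    (α p : ℝ) (hp0 : 0 ≤ p) (hp1 : p ≤ 1)
    (X₁ X₂ : Ω → ℝ) (hX₁ : Measurable X₁) (hX₂ : Measurable X₂)
    (hBer : μ.map X₁ = ENNReal.ofReal p • Measure.dirac (1 : ℝ)
      + ENNReal.ofReal (1 - p) • Measure.dirac (0 : ℝ))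
    (hindep : IndepFun X₁ X₂ μ)
    (F : ℝ → ℝ) (hF : ∀ t, F t = (μ {ω | X₂ ω ≤ t}).toReal) (hFcont : Continuous F)
    (Z : Ω → ℝ) (hZ : Z = fun ω => α * X₁ ω + X₂ ω) :
    ∫ q : ℝ × ℝ,
        variance (μ[(fun ω => hball q.1 q.2 (Z ω)) |
          MeasurableSpace.comap X₁ inferInstance]) μ
        ∂((μ.map Z).prod (μ.map Z))
      = 2 * p * (1 - p) * variance (fun ω => F (Z ω) - F (Z ω - α)) μ := by
  obtain rfl : F = cdf (μ.map X₂) := funext fun t => by rw [hF, cdf_map_eq_toReal hX₂]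
  rw [← bernoulliMeasure_eq_ofReal_smul 1 0 hp0 hp1] at hBer
  have hZm : Measurable Z := hZ ▸ by fun_prop
  have := Measure.isProbabilityMeasure_map (μ := μ) hX₂.aemeasurable
  have := Measure.isProbabilityMeasure_map (μ := μ) hZm.aemeasurable
  set G : ℝ → ℝ := fun z => cdf (μ.map X₂) z - cdf (μ.map X₂) (z - α)
  have hG : Measurable G := by fun_prop
  have hGmem : MemLp G 2 (μ.map Z) := by
    refine .of_bound hG.aestronglyMeasurable 1 (ae_of_all _ fun z => ?_)
    rw [Real.norm_eq_abs, abs_sub_le_iff]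
    constructor <;> linarith [cdf_nonneg (μ.map X₂) z, cdf_le_one (μ.map X₂) z,
      cdf_nonneg (μ.map X₂) (z - α), cdf_le_one (μ.map X₂) (z - α)]
  calc _ = ∫ q : ℝ × ℝ, p * (1 - p) * (G q.1 - G q.2) ^ 2 ∂((μ.map Z).prod (μ.map Z)) := by
        refine integral_congr_ae (ae_of_all _ fun q => ?_)
        simp only [hZ]
        exact variance_condExp_hball hX₁ hX₂ hBer hindep hFcont q.1 q.2
    _ = p * (1 - p) * (2 * Var[G; μ.map Z]) := by
        rw [integral_const_mul, integral_sub_sq_prod_self hGmem]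
    _ = _ := by
        rw [variance_map hG.aemeasurable hZm.aemeasurable, Function.comp_def]
        ring

/-- Let `α > 0`, `X₁ ~ Bernoulli(p)` with `0 ≤ p ≤ 1`, `X₂` independent
of `X₁` with continuous CDF `F`, and `Z = αX₁ + X₂`.  With `Z₁, Z₂` independent copies of
`Z`, the ball sensitivity numerator with respect to `X₁` satisfies
`S¹₂ = E_{Z₁,Z₂}[Var(E[h_{Z₁,Z₂}(Z) | X₁])] = 2p(1-p)·Var(F(Z) - F(Z-α))`. -/
theorem stmt10 {Ω : Type*} [MeasurableSpace Ω] (μ : Measure Ω) [IsProbabilityMeasure μ]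
    (α p : ℝ) (hα : 0 < α) (hp0 : 0 ≤ p) (hp1 : p ≤ 1)
    (X₁ X₂ : Ω → ℝ) (hX₁ : Measurable X₁) (hX₂ : Measurable X₂)
    (hBer : μ.map X₁ = ENNReal.ofReal p • Measure.dirac (1 : ℝ)
      + ENNReal.ofReal (1 - p) • Measure.dirac (0 : ℝ))
    (hindep : IndepFun X₁ X₂ μ)
    (F : ℝ → ℝ) (hF : ∀ t, F t = (μ {ω | X₂ ω ≤ t}).toReal) (hFcont : Continuous F)
    (Z : Ω → ℝ) (hZ : Z = fun ω => α * X₁ ω + X₂ ω) :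
    ∫ q : ℝ × ℝ,
        variance (μ[(fun ω => hball q.1 q.2 (Z ω)) |
          MeasurableSpace.comap X₁ inferInstance]) μ
        ∂((μ.map Z).prod (μ.map Z))
      = 2 * p * (1 - p) * variance (fun ω => F (Z ω) - F (Z ω - α)) μ :=
  stmt10_general μ α p hp0 hp1 X₁ X₂ hX₁ hX₂ hBer hindep F hF hFcont Z hZ
end

section
/- Let α > 0, b > 0, let X₁ be Bernoulli(p) with 0 ≤ p ≤ 1 and X₂ uniform on (0,b) independent of X₁, set Z = αX₁ + X₂, and let F be the cumulative distribution function of X₂, i.e. F(x) = min(max(x/b, 0), 1). Then E[ (F(Z) − F(Z−α))² ] = (α/b)² (1 − (2/3)(α/b)) if α ≤ b, and E[ (F(Z) − F(Z−α))² ] = 1/3 if α > b. -/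
/-!
Conditionally on `X₁ = 0` the increment `F(Z) - F(Z - α)` equals `min(X₂, α)/b`, and conditionally
on `X₁ = 1` it equals `min(b - X₂, α)/b`. Since `X₂ ↦ b - X₂` preserves the uniform law on `(0, b)`,
both conditional second moments are `(1/b) ∫₀ᵇ (min(x, α)/b)² dx`, so the answer does not depend
on `p` and is that elementary integral.
-/

open MeasureTheory ProbabilityTheory Real Set

noncomputable def uniformCDF (b x : ℝ) : ℝ := min (max (x / b) 0) 1

section uniformCDF

variable {b x : ℝ}

theorem uniformCDF_of_nonpos (hb : 0 ≤ b) (hx : x ≤ 0) : uniformCDF b x = 0 := by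
  rw [uniformCDF, max_eq_right (div_nonpos_of_nonpos_of_nonneg hx hb), min_eq_left zero_le_one]

theorem uniformCDF_of_mem_Icc (hb : 0 < b) (hx : x ∈ Icc 0 b) : uniformCDF b x = x / b := by
  rw [uniformCDF, max_eq_left (div_nonneg hx.1 hb.le), min_eq_left ((div_le_one hb).mpr hx.2)]

theorem uniformCDF_of_le (hb : 0 < b) (hx : b ≤ x) : uniformCDF b x = 1 :=
  min_eq_right (le_max_of_le_left ((one_le_div hb).mpr hx))

theorem uniformCDF_mem_Icc (b x : ℝ) : uniformCDF b x ∈ Icc 0 1 :=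
  ⟨le_min (le_max_right _ _) zero_le_one, min_le_right _ _⟩

@[fun_prop]
theorem continuous_uniformCDF (b : ℝ) : Continuous (uniformCDF b) := by
  unfold uniformCDF; fun_prop

theorem sq_uniformCDF_sub_uniformCDF_le_one (x y : ℝ) :
    (uniformCDF b x - uniformCDF b y) ^ 2 ≤ 1 := by
  obtain ⟨hx0, hx1⟩ := uniformCDF_mem_Icc b x
  obtain ⟨hy0, hy1⟩ := uniformCDF_mem_Icc b y
  exact (sq_le_one_iff_abs_le_one _).mpr (abs_sub_le_of_nonneg_of_le hx0 hx1 hy0 hy1)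

theorem uniformCDF_sub_uniformCDF_sub {α : ℝ} (hα : 0 ≤ α) (hb : 0 < b) (hx : x ∈ Icc 0 b) :
    uniformCDF b x - uniformCDF b (x - α) = min x α / b := by
  rw [uniformCDF_of_mem_Icc hb hx]
  rcases le_total x α with h | h
  · rw [uniformCDF_of_nonpos hb.le (by linarith), min_eq_left h, sub_zero]
  · rw [uniformCDF_of_mem_Icc hb ⟨by linarith, by linarith [hx.2]⟩, min_eq_right h]
    ring

theorem uniformCDF_add_sub_uniformCDF {α : ℝ} (hα : 0 ≤ α) (hb : 0 < b) (hx : x ∈ Icc 0 b) :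
    uniformCDF b (α + x) - uniformCDF b x = min (b - x) α / b := by
  rw [uniformCDF_of_mem_Icc hb hx]
  rcases le_total (α + x) b with h | h
  · rw [uniformCDF_of_mem_Icc hb ⟨by linarith [hx.1], h⟩, min_eq_right (by linarith)]
    ring
  · rw [uniformCDF_of_le hb h, min_eq_left (by linarith)]
    field_simp

end uniformCDF

theorem intervalIntegral_min_sq {α b : ℝ} (hα : 0 ≤ α) (hb : 0 ≤ b) :
    ∫ x in (0 : ℝ)..b, min x α ^ 2 = if α ≤ b then b * α ^ 2 - 2 / 3 * α ^ 3 else b ^ 3 / 3 := by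
  have hcont : Continuous fun x : ℝ => min x α ^ 2 := by fun_prop
  split_ifs with h
  · have below : ∫ x in (0 : ℝ)..α, min x α ^ 2 = ∫ x in (0 : ℝ)..α, x ^ 2 :=
      intervalIntegral.integral_congr fun x hx => by
        rw [uIcc_of_le hα] at hx; simp only [min_eq_left hx.2]
    have above : ∫ x in α..b, min x α ^ 2 = ∫ _ in α..b, α ^ 2 :=
      intervalIntegral.integral_congr fun x hx => by
        rw [uIcc_of_le h] at hx; simp only [min_eq_right hx.1]
    rw [← intervalIntegral.integral_add_adjacent_intervals (b := α)
      (hcont.intervalIntegrable _ _) (hcont.intervalIntegrable _ _), below, above,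
      integral_pow, intervalIntegral.integral_const, smul_eq_mul]
    ring
  · have below : ∫ x in (0 : ℝ)..b, min x α ^ 2 = ∫ x in (0 : ℝ)..b, x ^ 2 :=
      intervalIntegral.integral_congr fun x hx => by
        rw [uIcc_of_le hb] at hx; simp only [min_eq_left (hx.2.trans (not_le.mp h).le)]
    rw [below, integral_pow]
    ring

theorem intervalIntegral_sq_min_div {α b : ℝ} (hα : 0 ≤ α) (hb : 0 < b) :
    b⁻¹ * ∫ x in (0 : ℝ)..b, (min x α / b) ^ 2
      = if α ≤ b then (α / b) ^ 2 * (1 - (2 / 3) * (α / b)) else 1 / 3 := by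
  simp only [div_pow]
  rw [intervalIntegral.integral_div, intervalIntegral_min_sq hα hb.le]
  split_ifs <;> field_simp

theorem integral_cond_Ioo {f : ℝ → ℝ} {a b : ℝ} (hab : a < b) :
    ∫ y, f y ∂(ProbabilityTheory.cond volume (Ioo a b)) = (b - a)⁻¹ * ∫ x in a..b, f x := by
  rw [ProbabilityTheory.cond, integral_smul_measure, Real.volume_Ioo,
    ← integral_Ioc_eq_integral_Ioo, ← intervalIntegral.integral_of_le hab.le,
    ENNReal.toReal_inv, ENNReal.toReal_ofReal (by linarith), smul_eq_mul]

theorem ProbabilityTheory.IndepFun.integral_comp_eq_of_ae_integral_eq {Ω α β E : Type*}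
    [MeasurableSpace Ω] {μ : Measure Ω} [IsProbabilityMeasure μ] [MeasurableSpace α]
    [MeasurableSpace β] [NormedAddCommGroup E] [NormedSpace ℝ E] [CompleteSpace E]
    {X : Ω → α} {Y : Ω → β} (hX : AEMeasurable X μ) (hY : AEMeasurable Y μ)
    (hXY : IndepFun X Y μ) {φ : α × β → E} (hφ : Integrable φ ((μ.map X).prod (μ.map Y)))
    {c : E} (hc : ∀ᵐ x ∂μ.map X, ∫ y, φ (x, y) ∂μ.map Y = c) :
    ∫ ω, φ (X ω, Y ω) ∂μ = c := by
  have hlaw := (indepFun_iff_map_prod_eq_prod_map_map hX hY).mp hXY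
  have := Measure.isProbabilityMeasure_map hX
  have := Measure.isProbabilityMeasure_map hY
  rw [← integral_map (hX.prodMk hY) (hlaw ▸ hφ.aestronglyMeasurable), hlaw,
    integral_prod φ hφ, integral_congr_ae hc, integral_const, probReal_univ, one_smul]

theorem ae_eq_or_eq_of_smul_dirac_add_smul_dirac {α : Type*} [MeasurableSpace α]
    [MeasurableSingletonClass α] (a b : α) (c d : ENNReal) :
    ∀ᵐ x ∂(c • Measure.dirac a + d • Measure.dirac b), x = a ∨ x = b := by
  rw [ae_add_measure_iff]
  exact ⟨Measure.ae_smul_measure (by simp) _, Measure.ae_smul_measure (by simp) _⟩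

theorem integral_sq_uniformCDF_sub_uniformCDF_sub {α b : ℝ} (hα : 0 ≤ α) (hb : 0 < b) :
    ∫ y, (uniformCDF b y - uniformCDF b (y - α)) ^ 2 ∂(ProbabilityTheory.cond volume (Ioo 0 b))
      = if α ≤ b then (α / b) ^ 2 * (1 - (2 / 3) * (α / b)) else 1 / 3 := by
  have hmin : ∫ x in (0 : ℝ)..b, (uniformCDF b x - uniformCDF b (x - α)) ^ 2
      = ∫ x in (0 : ℝ)..b, (min x α / b) ^ 2 :=
    intervalIntegral.integral_congr fun x hx => by
      rw [uIcc_of_le hb.le] at hx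
      simp only [uniformCDF_sub_uniformCDF_sub hα hb hx]
  rw [integral_cond_Ioo hb, sub_zero, hmin, intervalIntegral_sq_min_div hα hb]

theorem integral_sq_uniformCDF_add_sub_uniformCDF {α b : ℝ} (hα : 0 ≤ α) (hb : 0 < b) :
    ∫ y, (uniformCDF b (α + y) - uniformCDF b y) ^ 2 ∂(ProbabilityTheory.cond volume (Ioo 0 b))
      = if α ≤ b then (α / b) ^ 2 * (1 - (2 / 3) * (α / b)) else 1 / 3 := by
  have hmin : ∫ x in (0 : ℝ)..b, (uniformCDF b (α + x) - uniformCDF b x) ^ 2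
      = ∫ x in (0 : ℝ)..b, (min (b - x) α / b) ^ 2 :=
    intervalIntegral.integral_congr fun x hx => by
      rw [uIcc_of_le hb.le] at hx
      simp only [uniformCDF_add_sub_uniformCDF hα hb hx]
  rw [integral_cond_Ioo hb, sub_zero, hmin,
    intervalIntegral.integral_comp_sub_left (fun x => (min x α / b) ^ 2), sub_self, sub_zero,
    intervalIntegral_sq_min_div hα hb]

theorem stmt12_general {Ω : Type*} [MeasurableSpace Ω] (μ : Measure Ω) [IsProbabilityMeasure μ]
    (α b p : ℝ) (hα : 0 < α) (hb : 0 < b)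
    (X₁ X₂ : Ω → ℝ) (hX₁ : Measurable X₁) (hX₂ : Measurable X₂)
    (hBer : μ.map X₁ = ENNReal.ofReal p • Measure.dirac (1 : ℝ)
      + ENNReal.ofReal (1 - p) • Measure.dirac (0 : ℝ))
    (hUnif : μ.map X₂ = ProbabilityTheory.cond volume (Set.Ioo 0 b))
    (hindep : IndepFun X₁ X₂ μ)
    (Z : Ω → ℝ) (hZ : Z = fun ω => α * X₁ ω + X₂ ω)
    (F : ℝ → ℝ) (hF : ∀ x, F x = min (max (x / b) 0) 1) :
    ∫ ω, (F (Z ω) - F (Z ω - α)) ^ 2 ∂μ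
      = if α ≤ b then (α / b) ^ 2 * (1 - (2 / 3) * (α / b)) else 1 / 3 := by
  obtain rfl : F = uniformCDF b := funext hF
  subst hZ
  set φ : ℝ × ℝ → ℝ := fun q =>
    (uniformCDF b (α * q.1 + q.2) - uniformCDF b (α * q.1 + q.2 - α)) ^ 2
  have hφ : Integrable φ ((μ.map X₁).prod (μ.map X₂)) :=
    have := Measure.isProbabilityMeasure_map (μ := μ) hX₁.aemeasurable
    have := Measure.isProbabilityMeasure_map (μ := μ) hX₂.aemeasurable
    Integrable.of_bound (by fun_prop) 1 (ae_of_all _ fun q => by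
      simpa [φ] using sq_uniformCDF_sub_uniformCDF_le_one _ _)
  refine hindep.integral_comp_eq_of_ae_integral_eq hX₁.aemeasurable hX₂.aemeasurable hφ ?_
  rw [hBer, hUnif]
  filter_upwards [ae_eq_or_eq_of_smul_dirac_add_smul_dirac (1 : ℝ) 0 _ _] with x hx
  rcases hx with rfl | rfl
  · simpa [φ] using integral_sq_uniformCDF_add_sub_uniformCDF hα.le hb
  · simpa [φ] using integral_sq_uniformCDF_sub_uniformCDF_sub hα.le hb

/-- Let `α > 0`, `b > 0`, `X₁ ~ Bernoulli(p)` with `0 ≤ p ≤ 1`, `X₂`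
uniform on `(0,b)` independent of `X₁`, `Z = αX₁ + X₂`, and `F(x) = min(max(x/b,0),1)`
the CDF of `X₂`.  Then `E[(F(Z) - F(Z-α))²] = (α/b)²(1 - (2/3)(α/b))` if `α ≤ b`, and
`E[(F(Z) - F(Z-α))²] = 1/3` if `α > b`. -/
theorem stmt12 {Ω : Type*} [MeasurableSpace Ω] (μ : Measure Ω) [IsProbabilityMeasure μ]
    (α b p : ℝ) (hα : 0 < α) (hb : 0 < b) (hp0 : 0 ≤ p) (hp1 : p ≤ 1)
    (X₁ X₂ : Ω → ℝ) (hX₁ : Measurable X₁) (hX₂ : Measurable X₂)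
    (hBer : μ.map X₁ = ENNReal.ofReal p • Measure.dirac (1 : ℝ)
      + ENNReal.ofReal (1 - p) • Measure.dirac (0 : ℝ))
    (hUnif : μ.map X₂ = ProbabilityTheory.cond volume (Set.Ioo 0 b))
    (hindep : IndepFun X₁ X₂ μ)
    (Z : Ω → ℝ) (hZ : Z = fun ω => α * X₁ ω + X₂ ω)
    (F : ℝ → ℝ) (hF : ∀ x, F x = min (max (x / b) 0) 1) :
    ∫ ω, (F (Z ω) - F (Z ω - α)) ^ 2 ∂μ
      = if α ≤ b then (α / b) ^ 2 * (1 - (2 / 3) * (α / b)) else 1 / 3 :=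
  stmt12_general μ α b p hα hb X₁ X₂ hX₁ hX₂ hBer hUnif hindep Z hZ F hF
end
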